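/- arXiv:1802.07646 — 2 statements merged into one kernel-verified Lean document; each statement's English description precedes it below -/
import Mathlib

section
/- Let G be a finite non-cyclic abelian group whose order is divisible by at least two distinct primes. Then for every maximal cyclic subgroup M of G, the following are equivalent: (1) the cut-set M̃ of the power graph P(G) is a minimal cut-set; (2) M̄ = M̃; (3) every Sylow subgroup of G is non-cyclic. -/
/-- The power graph of a group `G`. -/
def powerGraph (G : Type*) [Group G] : SimpleGraph G where
  Adj x y := x ≠ y ∧ (x ∈ Subgroup.zpowers y ∨ y ∈ Subgroup.zpowers x)
  symm := ⟨fun x y h => ⟨h.1.symm, h.2.symm⟩⟩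
  loopless := ⟨fun x h => h.1 rfl⟩

/-- `X` is a (vertex) cut-set of the power graph of `G`:
removing `X` leaves a disconnected induced subgraph. -/
def IsCutSet {G : Type*} [Group G] (X : Set G) : Prop :=
  ¬ ((powerGraph G).induce Xᶜ).Preconnected

/-- `X` is a minimal cut-set of the power graph of `G`. -/
def IsMinimalCutSet {G : Type*} [Group G] (X : Set G) : Prop :=
  IsCutSet X ∧ ∀ x ∈ X, ¬ IsCutSet (X \ {x})

/-- `X` is a minimum cut-set of the power graph of `G`. -/
def IsMinimumCutSet {G : Type*} [Group G] (X : Set G) : Prop :=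
  IsCutSet X ∧ ∀ Y : Set G, IsCutSet Y → X.ncard ≤ Y.ncard

/-- The vertex connectivity of the power graph of `G`: the least number of vertices
whose removal disconnects the graph or leaves only one vertex. -/
noncomputable def kappa (G : Type*) [Group G] : ℕ :=
  sInf {m | ∃ X : Set G, X.ncard = m ∧ (IsCutSet X ∨ Xᶜ.ncard = 1)}

/-- `M` is a maximal cyclic subgroup of `G`: cyclic and not properly contained
in any cyclic subgroup. -/
def IsMaxCyclic {G : Type*} [Group G] (M : Subgroup G) : Prop :=
  (∃ x : G, M = Subgroup.zpowers x) ∧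
    ∀ N : Subgroup G, (∃ y : G, N = Subgroup.zpowers y) → M ≤ N → M = N

/-- The set of non-generators of a (cyclic) subgroup `M` of `G`. -/
def nonGens {G : Type*} [Group G] (M : Subgroup G) : Set G :=
  {x | x ∈ M ∧ Subgroup.zpowers x ≠ M}

/-- `Mbar M` is the union of the sets `M ∩ ⟨y⟩` over all `y ∈ G \ M`. -/
def Mbar {G : Type*} [Group G] (M : Subgroup G) : Set G :=
  ⋃ y ∈ (M : Set G)ᶜ, ((M : Set G) ∩ (Subgroup.zpowers y : Set G))

/-- `(A, B)` is a separation of the induced subgraph of the power graph of `G` on `S`. -/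
def IsSeparationOn {G : Type*} [Group G] (S A B : Set G) : Prop :=
  A.Nonempty ∧ B.Nonempty ∧ Disjoint A B ∧ A ∪ B = S ∧
    ∀ a ∈ A, ∀ b ∈ B, ¬ (powerGraph G).Adj a b

/-!
Removing `M̃` separates the generators of `M` from `G \ M`, and a non-generator `x` may stay on
the generators' side without creating an edge to `G \ M` exactly when `x ∉ M̄`.

If a Sylow `q`-subgroup `P` is cyclic, then `P ≤ M` by maximality, and for `M = ⟨g⟩` the element
`g ^ q` lies in `M̃ \ M̄`: were `g ^ q ∈ ⟨y⟩` with `y ∉ M`, the `q'`-part of `y` together with `P`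
would generate a cyclic group containing `M`, forcing `y ∈ M`.

If no Sylow subgroup is cyclic, then for every prime `q ∣ |G|` some `z ∉ M` has order `q`.
Multiplying a generator of `M` by such a `z` shows `M̄ = M̃`. Elements `a, b ∉ M` of coprime
orders are joined through `a * b ∉ M`, since both are powers of `a * b`; splitting any `y ∉ M`
into its `q₁`-part and `q₁'`-part therefore connects all of `G \ M` to elements of orders `q₁`
and `q₂`, and this component contains every vertex left after restoring one `x ∈ M̄`.
-/

open Subgroup

section Group
variable {G : Type*} [Group G]

theorem Subgroup.mem_of_pow_mem_of_coprime {H : Subgroup G} {y : G} {k l : ℕ}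
    (hkl : k.Coprime l) (hk : y ^ k ∈ H) (hl : y ^ l ∈ H) : y ∈ H := by
  have hbez : ((1 : ℕ) : ℤ) = k * k.gcdA l + l * k.gcdB l := hkl ▸ Nat.gcd_eq_gcd_ab k l
  have : y = (y ^ k) ^ k.gcdA l * (y ^ l) ^ k.gcdB l := by
    rw [← zpow_natCast, ← zpow_natCast y l, ← zpow_mul, ← zpow_mul, ← zpow_add, ← hbez,
      Nat.cast_one, zpow_one]
  rw [this]
  exact H.mul_mem (H.zpow_mem hk _) (H.zpow_mem hl _)

theorem pow_ordCompl_pow_ordProj_eq_one (g : G) (q : ℕ) :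
    (g ^ ordCompl[q] (orderOf g)) ^ ordProj[q] (orderOf g) = 1 := by
  rw [← pow_mul, mul_comm, Nat.ordProj_mul_ordCompl_eq_self, pow_orderOf_eq_one]

variable [Finite G]

theorem coprime_orderOf_pow_ordProj {q : ℕ} (hq : q.Prime) (g : G) :
    q.Coprime (orderOf (g ^ ordProj[q] (orderOf g))) := by
  refine (Nat.coprime_ordCompl hq (orderOf_pos g).ne').coprime_dvd_right
    (orderOf_dvd_of_pow_eq_one ?_)
  rw [← pow_mul, Nat.ordProj_mul_ordCompl_eq_self, pow_orderOf_eq_one]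

theorem coprime_ordCompl_ordProj {q : ℕ} (hq : q.Prime) (g : G) :
    (ordCompl[q] (orderOf g)).Coprime (ordProj[q] (orderOf g)) :=
  ((Nat.coprime_ordCompl hq (orderOf_pos g).ne').pow_left _).symm

theorem mem_nonGens_zpowers_iff {g x : G} :
    x ∈ nonGens (zpowers g) ↔ x ∈ zpowers g ∧ orderOf x ≠ orderOf g := by
  refine and_congr_right fun hx => not_congr ?_
  rw [← Nat.card_zpowers, ← Nat.card_zpowers]
  exact ⟨fun h => h ▸ rfl, fun h => eq_of_le_of_card_ge (zpowers_le.mpr hx) h.ge⟩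

theorem Sylow.coprime_orderOf_of_mem {q : ℕ} [Fact q.Prime] (P : Sylow q G) {p b : G}
    (hp : p ∈ P) (hb : q.Coprime (orderOf b)) : (orderOf p).Coprime (orderOf b) :=
  (hb.pow_left _).coprime_dvd_left
    (P.card_eq_multiplicity ▸ (P : Subgroup G).orderOf_dvd_natCard hp)

end Group

section CommGroup
variable {G : Type*} [CommGroup G]

theorem mem_zpowers_mul_left_of_coprime {a b : G} (hab : (orderOf a).Coprime (orderOf b)) :
    a ∈ zpowers (a * b) := by
  refine mem_of_pow_mem_of_coprime hab ?_ ?_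
  · rw [pow_orderOf_eq_one]; exact one_mem _
  · have : a ^ orderOf b = (a * b) ^ orderOf b := by rw [mul_pow, pow_orderOf_eq_one, mul_one]
    rw [this]; exact npow_mem_zpowers _ _

theorem mem_zpowers_mul_right_of_coprime {a b : G} (hab : (orderOf a).Coprime (orderOf b)) :
    b ∈ zpowers (a * b) :=
  mul_comm a b ▸ mem_zpowers_mul_left_of_coprime hab.symm

theorem mem_zpowers_pow_of_coprime {c y : G} {k : ℕ} (hc : c ∈ zpowers y)
    (hk : (orderOf c).Coprime k) : c ∈ zpowers (y ^ k) := by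
  refine mem_of_pow_mem_of_coprime hk ?_ ?_
  · rw [pow_orderOf_eq_one]; exact one_mem _
  · obtain ⟨j, rfl⟩ := mem_zpowers_iff.mp hc
    simpa only [← zpow_natCast, ← zpow_mul, mul_comm] using zpow_mem_zpowers (y ^ k) j

theorem mem_sylow_of_pow_eq_one {q k : ℕ} [Fact q.Prime] (P : Sylow q G) {w : G}
    (hw : w ^ q ^ k = 1) : w ∈ P := by
  have hpgroup : IsPGroup q (zpowers w) :=
    IsPGroup.of_card_dvd_pow (by rw [Nat.card_zpowers]; exact orderOf_dvd_of_pow_eq_one hw)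
  exact hpgroup.le_sylow_of_normal P (mem_zpowers w)

end CommGroup

section Mbar
variable {G : Type*} [Group G] {M : Subgroup G}

theorem mem_Mbar {x : G} : x ∈ Mbar M ↔ ∃ y ∉ M, x ∈ M ∧ x ∈ zpowers y := by
  simp only [Mbar, Set.mem_iUnion, Set.mem_inter_iff, Set.mem_compl_iff, SetLike.mem_coe,
    exists_prop]

theorem Mbar_subset_nonGens (hM : IsMaxCyclic M) : Mbar M ⊆ nonGens M := by
  intro x hx
  obtain ⟨y, hyM, hxM, hxy⟩ := mem_Mbar.mp hx
  refine ⟨hxM, fun hgen => hyM ?_⟩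
  rw [hM.2 _ ⟨y, rfl⟩ (hgen ▸ zpowers_le.mpr hxy)]
  exact mem_zpowers y

end Mbar

section MaxCyclic
variable {G : Type*} [CommGroup G] {M : Subgroup G}

theorem IsMaxCyclic.mem_of_pow_mem_zpowers (hM : IsMaxCyclic M) {g a b : G}
    (hMg : M = zpowers g) {k l : ℕ} (hkl : k.Coprime l) (hab : (orderOf a).Coprime (orderOf b))
    (ha : g ^ k ∈ zpowers a) (hb : g ^ l ∈ zpowers b) : a ∈ M ∧ b ∈ M := by
  have hg : g ∈ zpowers (a * b) := mem_of_pow_mem_of_coprime hkl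
    (zpowers_le.mpr (mem_zpowers_mul_left_of_coprime hab) ha)
    (zpowers_le.mpr (mem_zpowers_mul_right_of_coprime hab) hb)
  rw [hM.2 _ ⟨a * b, rfl⟩ (hMg ▸ zpowers_le.mpr hg)]
  exact ⟨mem_zpowers_mul_left_of_coprime hab, mem_zpowers_mul_right_of_coprime hab⟩

variable [Finite G]

theorem IsMaxCyclic.exists_pow_eq_one_notMem (hM : IsMaxCyclic M) {q : ℕ} (hq : q.Prime)
    {i : ℕ} {w : G} (hwM : w ∉ M) (hw : w ^ q ^ i = 1) : ∃ z ∉ M, z ^ q = 1 := by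
  induction i generalizing w with
  | zero =>
    rw [pow_zero, pow_one] at hw
    exact absurd (hw ▸ M.one_mem) hwM
  | succ i ih =>
    by_cases hwq : w ^ q ∈ M
    swap
    · exact ih hwq (by rw [← pow_mul, ← pow_succ']; exact hw)
    obtain ⟨g, hMg⟩ := hM.1
    obtain ⟨j, hj : g ^ j = w ^ q⟩ :=
      (isOfFinOrder_of_finite g).mem_powers_iff_mem_zpowers.mpr (hMg ▸ hwq)
    -- If `q ∣ j`, dividing `w` by a `q`-th root of `w ^ q` in `M` gives `z`; otherwise `w` and the
    -- `q'`-part of `g` generate a cyclic group containing `M`.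
    by_cases hqj : q ∣ j
    · obtain ⟨t, rfl⟩ := hqj
      refine ⟨w * (g ^ t)⁻¹, fun h => hwM ?_, ?_⟩
      · exact (M.mul_mem_cancel_right (M.inv_mem (hMg ▸ npow_mem_zpowers g t))).mp h
      · rw [mul_pow, inv_pow, ← pow_mul, mul_comm t q, hj, mul_inv_cancel]
    · refine absurd (hM.mem_of_pow_mem_zpowers hMg (l := ordProj[q] (orderOf g)) ?_ ?_
        (hj ▸ npow_mem_zpowers w q) (mem_zpowers _)).1 hwM
      · exact ((Nat.Coprime.pow_left _ (hq.coprime_iff_not_dvd.mpr hqj))).symm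
      · exact ((coprime_orderOf_pow_ordProj hq g).pow_left (i + 1)).coprime_dvd_left
          (orderOf_dvd_of_pow_eq_one hw)

theorem IsMaxCyclic.exists_pow_eq_one_notMem_of_sylow (hM : IsMaxCyclic M) {q : ℕ}
    [Fact q.Prime] (P : Sylow q G) (hP : ¬ IsCyclic P) : ∃ z ∉ M, z ^ q = 1 := by
  obtain ⟨g, hMg⟩ := hM.1
  obtain ⟨w, hwP, hwM⟩ : ∃ w ∈ (P : Subgroup G), w ∉ M := by
    by_contra! hPM
    have : IsCyclic M := hMg ▸ isCyclic_zpowers g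
    exact hP (isCyclic_of_le hPM)
  refine hM.exists_pow_eq_one_notMem Fact.out hwM (i := (Nat.card G).factorization q) ?_
  rw [← P.card_eq_multiplicity]
  exact orderOf_dvd_iff_pow_eq_one.mp ((P : Subgroup G).orderOf_dvd_natCard hwP)

theorem nonGens_subset_Mbar (hM : IsMaxCyclic M)
    (hz : ∀ q : ℕ, q.Prime → q ∣ Nat.card G → ∃ z ∉ M, z ^ q = 1) : nonGens M ⊆ Mbar M := by
  obtain ⟨g, rfl⟩ := hM.1
  intro x hx
  obtain ⟨hxg, hord⟩ := mem_nonGens_zpowers_iff.mp hx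
  obtain ⟨s, rfl : g ^ s = x⟩ := (isOfFinOrder_of_finite g).mem_powers_iff_mem_zpowers.mpr hxg
  have hgcd : (orderOf g).gcd s ≠ 1 := fun h => hord (by rw [orderOf_pow, h, Nat.div_one])
  obtain ⟨q, hq, hqgcd⟩ := Nat.exists_prime_and_dvd hgcd
  obtain ⟨z, hzM, hz⟩ :=
    hz q hq ((hqgcd.trans (Nat.gcd_dvd_left _ _)).trans (orderOf_dvd_natCard g))
  obtain ⟨t, rfl⟩ := hqgcd.trans (Nat.gcd_dvd_right _ _)
  refine mem_Mbar.mpr ⟨g * z, fun h => hzM ?_, hxg, ?_⟩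
  · exact ((zpowers g).mul_mem_cancel_left (mem_zpowers g)).mp h
  · have : (g * z) ^ (q * t) = g ^ (q * t) := by rw [mul_pow, pow_mul z, hz, one_pow, mul_one]
    exact this ▸ npow_mem_zpowers _ _

theorem IsMaxCyclic.sylow_le (hM : IsMaxCyclic M) {q : ℕ} [hq : Fact q.Prime] (P : Sylow q G)
    {p : G} (hP : zpowers p = P) : (P : Subgroup G) ≤ M := by
  obtain ⟨g, hMg⟩ := hM.1
  have hpM := (hM.mem_of_pow_mem_zpowers hMg (coprime_ordCompl_ordProj hq.out g)
    (P.coprime_orderOf_of_mem (hP ▸ mem_zpowers p) (coprime_orderOf_pow_ordProj hq.out g))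
    (hP ▸ mem_sylow_of_pow_eq_one P (pow_ordCompl_pow_ordProj_eq_one g q))
    (mem_zpowers _)).1
  exact hP ▸ zpowers_le.mpr hpM

theorem IsMaxCyclic.pow_notMem_Mbar (hM : IsMaxCyclic M) {g : G} (hMg : M = zpowers g)
    {q : ℕ} [hq : Fact q.Prime] (hqg : q ∣ orderOf g) (P : Sylow q G) {p : G}
    (hP : zpowers p = P) : g ^ q ∉ Mbar M := by
  intro hx
  obtain ⟨y, hyM, -, hgy⟩ := mem_Mbar.mp hx
  have hgy' : g ^ ordProj[q] (orderOf g) ∈ zpowers (y ^ ordProj[q] (orderOf y)) := by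
    refine mem_zpowers_pow_of_coprime ?_ ((coprime_orderOf_pow_ordProj hq.out g).pow_left _).symm
    obtain ⟨e, he⟩ : q ∣ ordProj[q] (orderOf g) := dvd_pow_self q
      (hq.out.factorization_pos_of_dvd (orderOf_pos g).ne' hqg).ne'
    rw [he, pow_mul]
    exact zpowers_le.mpr hgy (npow_mem_zpowers _ _)
  have hbM := (hM.mem_of_pow_mem_zpowers hMg (coprime_ordCompl_ordProj hq.out g)
    (P.coprime_orderOf_of_mem (hP ▸ mem_zpowers p) (coprime_orderOf_pow_ordProj hq.out y))
    (hP ▸ mem_sylow_of_pow_eq_one P (pow_ordCompl_pow_ordProj_eq_one g q)) hgy').2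
  exact hyM (mem_of_pow_mem_of_coprime (coprime_ordCompl_ordProj hq.out y)
    (hM.sylow_le P hP (mem_sylow_of_pow_eq_one P (pow_ordCompl_pow_ordProj_eq_one y q))) hbM)

theorem IsMaxCyclic.exists_mem_nonGens_notMem_Mbar (hM : IsMaxCyclic M) {q : ℕ}
    (hq : q.Prime) (hqG : q ∣ Nat.card G) (P : Sylow q G) (hP : IsCyclic P) :
    ∃ x ∈ nonGens M, x ∉ Mbar M := by
  have : Fact q.Prime := ⟨hq⟩
  obtain ⟨g, hMg⟩ := hM.1
  obtain ⟨p, hp⟩ := (P : Subgroup G).isCyclic_iff_exists_zpowers_eq_top.mp hP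
  obtain ⟨z, hz⟩ := exists_prime_orderOf_dvd_card' q hqG
  have hqg : q ∣ orderOf g := hz ▸ orderOf_dvd_of_mem_zpowers (hMg ▸ hM.sylow_le P hp
    (mem_sylow_of_pow_eq_one P (k := 1) (by rw [pow_one, ← hz, pow_orderOf_eq_one])))
  refine ⟨g ^ q, hMg ▸ mem_nonGens_zpowers_iff.mpr ⟨npow_mem_zpowers g q, ?_⟩,
    hM.pow_notMem_Mbar hMg hqg P hp⟩
  rw [orderOf_pow' g hq.ne_zero, Nat.gcd_eq_right hqg]
  exact (Nat.div_lt_self (orderOf_pos g) hq.one_lt).ne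

end MaxCyclic

section CutSet
variable {G : Type*} [Group G] {M : Subgroup G}

theorem IsSeparationOn.not_preconnected {S A B : Set G} (h : IsSeparationOn S A B) :
    ¬ ((powerGraph G).induce S).Preconnected := by
  obtain ⟨⟨a, ha⟩, ⟨b, hb⟩, hAB, rfl, hadj⟩ := h
  intro hconn
  obtain ⟨w⟩ := hconn ⟨a, Or.inl ha⟩ ⟨b, Or.inr hb⟩
  obtain ⟨d, -, hdA, hdA'⟩ :=
    w.exists_boundary_dart {v : ↥(A ∪ B) | (v : G) ∈ A} ha (Set.disjoint_right.mp hAB hb)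
  exact hadj _ hdA _ (d.snd.2.resolve_left hdA') d.adj

theorem isCutSet_nonGens_diff (hnc : ¬ IsCyclic G) (hM : IsMaxCyclic M) {T : Set G}
    (hT : Disjoint T (Mbar M)) : IsCutSet (nonGens M \ T) := by
  obtain ⟨g, hMg⟩ := hM.1
  have hMc : (M : Set G)ᶜ ⊆ (nonGens M \ T)ᶜ :=
    Set.compl_subset_compl.mpr fun x hx => hx.1.1
  refine IsSeparationOn.not_preconnected (A := (nonGens M \ T)ᶜ ∩ M) (B := (M : Set G)ᶜ)
    ⟨⟨g, fun h => h.1.2 hMg.symm, hMg ▸ mem_zpowers g⟩, ?_,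
      disjoint_compl_right.mono_left Set.inter_subset_right,
      by rw [← Set.inter_eq_right.mpr hMc, Set.inter_union_compl], ?_⟩
  · refine Set.nonempty_compl.mpr fun h => hnc (isCyclic_iff_exists_zpowers_eq_top.mpr ⟨g, ?_⟩)
    rw [← hMg, ← coe_eq_univ, h]
  · rintro a ⟨haS, haM⟩ b hbM ⟨-, hab | hba⟩
    · have ha : a ∈ Mbar M := mem_Mbar.mpr ⟨b, hbM, haM, hab⟩
      exact haS ⟨Mbar_subset_nonGens hM ha, Set.disjoint_right.mp hT ha⟩
    · exact hbM (zpowers_le.mpr haM hba)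

theorem reachable_of_mem_zpowers {V : Set G} {a b : G} (ha : a ∈ V) (hb : b ∈ V) (h : a ∈ zpowers b) :
    ((powerGraph G).induce V).Reachable ⟨a, ha⟩ ⟨b, hb⟩ := by
  by_cases hab : a = b
  · subst hab; rfl
  · exact SimpleGraph.Adj.reachable (⟨hab, Or.inl h⟩ : (powerGraph G).Adj a b)

end CutSet

section Connectivity
variable {G : Type*} [CommGroup G] {M : Subgroup G} {V : Set G}

theorem reachable_of_coprime (hV : (M : Set G)ᶜ ⊆ V) {a b : G} (ha : a ∉ M) (hb : b ∉ M)
    (hab : (orderOf a).Coprime (orderOf b)) :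
    ((powerGraph G).induce V).Reachable ⟨a, hV ha⟩ ⟨b, hV hb⟩ := by
  have hc : a * b ∉ M := fun h => ha (zpowers_le.mpr h (mem_zpowers_mul_left_of_coprime hab))
  exact (reachable_of_mem_zpowers _ (hV hc) (mem_zpowers_mul_left_of_coprime hab)).trans
    (reachable_of_mem_zpowers _ _ (mem_zpowers_mul_right_of_coprime hab)).symm

variable [Finite G]

theorem reachable_of_notMem (hV : (M : Set G)ᶜ ⊆ V) {q₁ q₂ : ℕ} (hq₁ : q₁.Prime)
    (hq₂ : q₂.Prime) (hne : q₁ ≠ q₂) {z₁ z₂ : G} (hz₁M : z₁ ∉ M) (hz₁ : z₁ ^ q₁ = 1)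
    (hz₂M : z₂ ∉ M) (hz₂ : z₂ ^ q₂ = 1) {y : G} (hy : y ∉ M) :
    ((powerGraph G).induce V).Reachable ⟨y, hV hy⟩ ⟨z₁, hV hz₁M⟩ := by
  have hq : q₁.Coprime q₂ := (Nat.coprime_primes hq₁ hq₂).mpr hne
  have hz₁z₂ := reachable_of_coprime hV hz₂M hz₁M ((hq.symm.coprime_dvd_left
    (orderOf_dvd_of_pow_eq_one hz₂)).coprime_dvd_right (orderOf_dvd_of_pow_eq_one hz₁))
  by_cases hb : y ^ ordProj[q₁] (orderOf y) ∈ M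
  · have ha : y ^ ordCompl[q₁] (orderOf y) ∉ M := fun ha =>
      hy (mem_of_pow_mem_of_coprime (coprime_ordCompl_ordProj hq₁ y) ha hb)
    refine (reachable_of_mem_zpowers _ _ (npow_mem_zpowers y _)).symm.trans
      ((reachable_of_coprime hV ha hz₂M ?_).trans hz₁z₂)
    exact ((hq.pow_left _).coprime_dvd_left (orderOf_dvd_of_pow_eq_one
      (pow_ordCompl_pow_ordProj_eq_one y q₁))).coprime_dvd_right (orderOf_dvd_of_pow_eq_one hz₂)
  · exact (reachable_of_mem_zpowers _ _ (npow_mem_zpowers y _)).symm.trans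
      (reachable_of_coprime hV hb hz₁M ((coprime_orderOf_pow_ordProj hq₁ y).symm.coprime_dvd_right
        (orderOf_dvd_of_pow_eq_one hz₁)))

theorem preconnected_compl_nonGens_diff {q₁ q₂ : ℕ} (hq₁ : q₁.Prime) (hq₂ : q₂.Prime)
    (hne : q₁ ≠ q₂) {z₁ z₂ : G} (hz₁M : z₁ ∉ M) (hz₁ : z₁ ^ q₁ = 1) (hz₂M : z₂ ∉ M)
    (hz₂ : z₂ ^ q₂ = 1) {x : G} (hx : x ∈ Mbar M) :
    ((powerGraph G).induce (nonGens M \ {x})ᶜ).Preconnected := by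
  have hV : (M : Set G)ᶜ ⊆ (nonGens M \ {x})ᶜ := Set.compl_subset_compl.mpr fun w hw => hw.1.1
  have hxV : x ∈ (nonGens M \ {x})ᶜ := fun h => h.2 rfl
  have hreach := fun y (hy : y ∉ M) =>
    reachable_of_notMem hV hq₁ hq₂ hne hz₁M hz₁ hz₂M hz₂ hy
  obtain ⟨y, hyM, hxM, hxy⟩ := mem_Mbar.mp hx
  have hxz₁ := (reachable_of_mem_zpowers hxV (hV hyM) hxy).trans (hreach y hyM)
  suffices h : ∀ v, ((powerGraph G).induce _).Reachable v ⟨z₁, hV hz₁M⟩ from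
    fun u v => (h u).trans (h v).symm
  rintro ⟨v, hv⟩
  by_cases hvM : v ∈ M
  · by_cases hvx : v = x
    · subst hvx; exact hxz₁
    · have hgen : zpowers v = M := by_contra fun h => hv ⟨⟨hvM, h⟩, hvx⟩
      exact (reachable_of_mem_zpowers hxV hv (hgen ▸ hxM)).symm.trans hxz₁
  · exact hreach v hvM

end Connectivity

/-- Proposition (M-M-2): `G` finite non-cyclic abelian with at least two distinct prime
divisors of its order; for every maximal cyclic subgroup `M` the following are equivalent:
(1) the cut-set `M̃` of `P(G)` is minimal; (2) `M̄ = M̃`; (3) every Sylow subgroup of `G`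
(at a prime dividing `|G|`) is non-cyclic. -/
theorem statement_18 {G : Type*} [CommGroup G] [Fintype G] (hnc : ¬ IsCyclic G)
    (hdiv : ∃ q₁ q₂ : ℕ, q₁.Prime ∧ q₂.Prime ∧ q₁ ≠ q₂ ∧
      q₁ ∣ Nat.card G ∧ q₂ ∣ Nat.card G)
    (M : Subgroup G) (hM : IsMaxCyclic M) :
    (IsMinimalCutSet (nonGens M) ↔
      (∀ q : ℕ, q.Prime → q ∣ Nat.card G →
        ∀ P : Sylow q G, ¬ IsCyclic ↥((P : Subgroup G)))) ∧
    (Mbar M = nonGens M ↔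
      (∀ q : ℕ, q.Prime → q ∣ Nat.card G →
        ∀ P : Sylow q G, ¬ IsCyclic ↥((P : Subgroup G)))) := by
  by_cases hS : ∀ q : ℕ, q.Prime → q ∣ Nat.card G → ∀ P : Sylow q G, ¬ IsCyclic P
  · have hz : ∀ q : ℕ, q.Prime → q ∣ Nat.card G → ∃ z ∉ M, z ^ q = 1 := fun q hq hqG => by
      have : Fact q.Prime := ⟨hq⟩
      obtain ⟨P⟩ : Nonempty (Sylow q G) := inferInstance
      exact hM.exists_pow_eq_one_notMem_of_sylow P (hS q hq hqG P)
    have hMbar : Mbar M = nonGens M :=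
      (Mbar_subset_nonGens hM).antisymm (nonGens_subset_Mbar hM hz)
    obtain ⟨q₁, q₂, hq₁, hq₂, hne, hq₁G, hq₂G⟩ := hdiv
    obtain ⟨z₁, hz₁M, hz₁⟩ := hz q₁ hq₁ hq₁G
    obtain ⟨z₂, hz₂M, hz₂⟩ := hz q₂ hq₂ hq₂G
    refine ⟨iff_of_true ⟨?_, fun x hx hcut => hcut ?_⟩ hS, iff_of_true hMbar hS⟩
    · simpa using isCutSet_nonGens_diff hnc hM (Set.empty_disjoint _)
    · exact preconnected_compl_nonGens_diff hq₁ hq₂ hne hz₁M hz₁ hz₂M hz₂ (hMbar ▸ hx)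
  · obtain ⟨q, hq, hqG, P, hP⟩ :
        ∃ q : ℕ, q.Prime ∧ q ∣ Nat.card G ∧ ∃ P : Sylow q G, IsCyclic P := by
      simpa using hS
    obtain ⟨x, hx, hxM⟩ := hM.exists_mem_nonGens_notMem_Mbar hq hqG P hP
    have hcut := isCutSet_nonGens_diff hnc hM (Set.disjoint_singleton_left.mpr hxM)
    exact ⟨iff_of_false (fun hmin => hmin.2 x hx hcut) hS,
      iff_of_false (fun h => hxM (h ▸ hx)) hS⟩
end

section
/- Let H be a cyclic group of order p1^{n1} p2^{n2}, where p1 < p2 are primes, n1, n2 ≥ 1, and p1 ≥ 3. Then every cut-set X of the power graph P(H) satisfies |X| > |H̃|, where H̃ is the set of non-generators of H, so |H̃| = p1^{n1} p2^{n2} − φ(p1^{n1} p2^{n2}). -/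
/-!
A generator of `H` is adjacent to every other vertex of the power graph, so a cut-set must
contain all `φ(n)` generators. Since the prime factors of `n` are at least `3` and `5`,
`φ(n) / n ≥ (2/3)(4/5) > 1/2`, hence `φ(n) > n - φ(n) = |H̃|`.
-/

theorem SimpleGraph.induce_preconnected_of_forall_adj {V : Type*} {G : SimpleGraph V}
    {s : Set V} {g : V} (hg : g ∈ s) (hadj : ∀ v ∈ s, v ≠ g → G.Adj v g) :
    (G.induce s).Preconnected := by
  have toCenter : ∀ w : s, (G.induce s).Reachable w ⟨g, hg⟩ := by
    intro w
    by_cases hw : (w : V) = g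
    · exact (Subtype.ext hw : w = ⟨g, hg⟩) ▸ SimpleGraph.Reachable.refl _
    · exact (SimpleGraph.induce_adj.mpr (hadj w w.2 hw)).reachable
  exact fun u v => (toCenter u).trans (toCenter v).symm

theorem IsCutSet.mem_of_zpowers_eq_top {G : Type*} [Group G] {X : Set G} (hX : IsCutSet X)
    {g : G} (hg : Subgroup.zpowers g = ⊤) : g ∈ X := by
  by_contra hgX
  refine hX (SimpleGraph.induce_preconnected_of_forall_adj hgX fun v _ hv => ⟨hv, Or.inl ?_⟩)
  simp [hg]

theorem zpowers_eq_top_iff_orderOf_eq_card {G : Type*} [Group G] [Finite G] {x : G} :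
    Subgroup.zpowers x = ⊤ ↔ orderOf x = Nat.card G := by
  refine ⟨orderOf_eq_card_of_zpowers_eq_top, fun h => Subgroup.eq_top_of_card_eq _ ?_⟩
  rw [Nat.card_zpowers, h]

theorem ncard_setOf_zpowers_eq_top {G : Type*} [Group G] [Fintype G] [IsCyclic G] :
    {x : G | Subgroup.zpowers x = ⊤}.ncard = (Nat.card G).totient := by
  classical
  have hgens : {x : G | Subgroup.zpowers x = ⊤} =
      ↑(Finset.univ.filter fun x : G => orderOf x = Fintype.card G) := by
    ext x
    simp [zpowers_eq_top_iff_orderOf_eq_card, Nat.card_eq_fintype_card]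
  rw [hgens, Set.ncard_coe_finset, Nat.card_eq_fintype_card]
  exact IsCyclic.card_orderOf_eq_totient dvd_rfl

theorem nonGens_top_eq_compl {G : Type*} [Group G] :
    nonGens (⊤ : Subgroup G) = {x : G | Subgroup.zpowers x = ⊤}ᶜ := by
  ext x
  simp [nonGens]

theorem ncard_nonGens_top {G : Type*} [Group G] [Fintype G] [IsCyclic G] :
    (nonGens (⊤ : Subgroup G)).ncard = Nat.card G - (Nat.card G).totient := by
  rw [nonGens_top_eq_compl, ← ncard_setOf_zpowers_eq_top, ← Set.ncard_univ,
    ← Set.ncard_sdiff (Set.subset_univ _), Set.compl_eq_univ_sdiff]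

theorem Nat.Prime.sub_one_mul_pow_le_mul_totient {p : ℕ} (hp : p.Prime) (k : ℕ) :
    (p - 1) * p ^ k ≤ p * (p ^ k).totient := by
  cases k with
  | zero => simp
  | succ k => rw [Nat.totient_prime_pow_succ hp, pow_succ]; apply le_of_eq; ring

theorem lt_two_mul_totient_prime_pow_mul_prime_pow {p₁ p₂ : ℕ} (hp₁ : p₁.Prime)
    (hp₂ : p₂.Prime) (hlt : p₁ < p₂) (h3 : 3 ≤ p₁) (n₁ n₂ : ℕ) :
    p₁ ^ n₁ * p₂ ^ n₂ < 2 * (p₁ ^ n₁ * p₂ ^ n₂).totient := by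
  have h5 : 5 ≤ p₂ := by
    by_contra h
    obtain rfl : p₂ = 4 := by omega
    norm_num at hp₂
  have hcop : (p₁ ^ n₁).Coprime (p₂ ^ n₂) :=
    Nat.Coprime.pow _ _ ((Nat.coprime_primes hp₁ hp₂).mpr hlt.ne)
  set n := p₁ ^ n₁ * p₂ ^ n₂
  have hn : 0 < n := by positivity
  have hlower : (p₁ - 1) * (p₂ - 1) * n ≤ p₁ * p₂ * n.totient := by
    calc (p₁ - 1) * (p₂ - 1) * n = ((p₁ - 1) * p₁ ^ n₁) * ((p₂ - 1) * p₂ ^ n₂) := by ring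
      _ ≤ (p₁ * (p₁ ^ n₁).totient) * (p₂ * (p₂ ^ n₂).totient) :=
        Nat.mul_le_mul (hp₁.sub_one_mul_pow_le_mul_totient n₁)
          (hp₂.sub_one_mul_pow_le_mul_totient n₂)
      _ = p₁ * p₂ * n.totient := by rw [Nat.totient_mul hcop]; ring
  have hprod : p₁ * p₂ < 2 * ((p₁ - 1) * (p₂ - 1)) := by
    zify [hp₁.one_le, hp₂.one_le]
    nlinarith
  have hscaled : p₁ * p₂ * n < p₁ * p₂ * (2 * n.totient) := by
    calc p₁ * p₂ * n < 2 * ((p₁ - 1) * (p₂ - 1)) * n := Nat.mul_lt_mul_of_pos_right hprod hn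
      _ = 2 * ((p₁ - 1) * (p₂ - 1) * n) := by ring
      _ ≤ 2 * (p₁ * p₂ * n.totient) := Nat.mul_le_mul_left 2 hlower
      _ = p₁ * p₂ * (2 * n.totient) := by ring
  exact Nat.lt_of_mul_lt_mul_left hscaled

theorem statement_19_general {H : Type*} [Group H] [Fintype H] (hH : IsCyclic H)
    (p₁ p₂ n₁ n₂ : ℕ) (hp₁ : p₁.Prime) (hp₂ : p₂.Prime) (hlt : p₁ < p₂)
    (h3 : 3 ≤ p₁)
    (hcard : Nat.card H = p₁ ^ n₁ * p₂ ^ n₂) :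
    (nonGens (⊤ : Subgroup H)).ncard
      = p₁ ^ n₁ * p₂ ^ n₂ - Nat.totient (p₁ ^ n₁ * p₂ ^ n₂) ∧
    ∀ X : Set H, IsCutSet X → (nonGens (⊤ : Subgroup H)).ncard < X.ncard := by
  have hnonGens := ncard_nonGens_top (G := H)
  rw [hcard] at hnonGens
  refine ⟨hnonGens, fun X hX => ?_⟩
  have hgens : {x : H | Subgroup.zpowers x = ⊤}.ncard ≤ X.ncard :=
    Set.ncard_le_ncard (fun _ hg => hX.mem_of_zpowers_eq_top hg) (Set.toFinite X)
  rw [ncard_setOf_zpowers_eq_top, hcard] at hgens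
  have hhalf := lt_two_mul_totient_prime_pow_mul_prime_pow hp₁ hp₂ hlt h3 n₁ n₂
  omega

/-- Lemma (max-min-cut): `H` cyclic of order `p₁^{n₁} p₂^{n₂}` with `3 ≤ p₁ < p₂`; then every
cut-set `X` of the power graph `P(H)` satisfies `|X| > |H̃|`, where `H̃` is the set of
non-generators of `H`, of size `p₁^{n₁} p₂^{n₂} - φ(p₁^{n₁} p₂^{n₂})`. -/
theorem statement_19 {H : Type*} [Group H] [Fintype H] (hH : IsCyclic H)
    (p₁ p₂ n₁ n₂ : ℕ) (hp₁ : p₁.Prime) (hp₂ : p₂.Prime) (hlt : p₁ < p₂)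
    (hn₁ : 1 ≤ n₁) (hn₂ : 1 ≤ n₂) (h3 : 3 ≤ p₁)
    (hcard : Nat.card H = p₁ ^ n₁ * p₂ ^ n₂) :
    (nonGens (⊤ : Subgroup H)).ncard
      = p₁ ^ n₁ * p₂ ^ n₂ - Nat.totient (p₁ ^ n₁ * p₂ ^ n₂) ∧
    ∀ X : Set H, IsCutSet X → (nonGens (⊤ : Subgroup H)).ncard < X.ncard :=
  statement_19_general hH p₁ p₂ n₁ n₂ hp₁ hp₂ hlt h3 hcard
end
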